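/- Stability of small solutions: Under the standing assumptions, let f ∈ C¹([0,∞)) be convex, increasing, with f(0) > 0 and lim_{s→∞} f(s)/s = +∞, let s₀ > 0 be a maximizer of s ↦ s/f(s) (so f(s₀) = s₀ f'(s₀)), and let λ* be the extremal parameter, which satisfies λ* ≤ λ_m(Ω) s₀/f(s₀). If 0 ≤ λ ≤ λ* and u is a bounded solution of (P(λf)) with u(x) ≤ s₀ for ν-a.e. x ∈ Ω, then u is stable. -/

import Mathlib

open MeasureTheory Set

/-- The `m`-boundary of a set `Ω`. -/
def mBoundary {X : Type*} [MeasurableSpace X] (m : X → MeasureTheory.Measure X)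
    (Ω : Set X) : Set X :=
  {x | x ∉ Ω ∧ 0 < m x Ω}

/-- The `m`-closure of a set `Ω`. -/
def mClosure {X : Type*} [MeasurableSpace X] (m : X → MeasureTheory.Measure X)
    (Ω : Set X) : Set X :=
  Ω ∪ mBoundary m Ω

/-- The nonlocal `m`-Laplacian. -/
noncomputable def deltaM {X : Type*} [MeasurableSpace X] (m : X → MeasureTheory.Measure X)
    (u : X → ℝ) (x : X) : ℝ :=
  ∫ y, (u y - u x) ∂(m x)

/-- `m` is a random walk: each `m x` is a probability measure and `x ↦ m x A` is measurable. -/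
def IsRandomWalk {X : Type*} [MeasurableSpace X] (m : X → MeasureTheory.Measure X) : Prop :=
  (∀ x, IsProbabilityMeasure (m x)) ∧
    ∀ A : Set X, MeasurableSet A → Measurable fun x => m x A

/-- `ν` is reversible with respect to the random walk `m`. -/
def Reversible {X : Type*} [MeasurableSpace X] (m : X → MeasureTheory.Measure X)
    (ν : MeasureTheory.Measure X) : Prop :=
  ∀ F : X → X → ℝ, Measurable (Function.uncurry F) → (∃ C, ∀ x y, |F x y| ≤ C) →
    ∫ x, (∫ y, F x y ∂(m x)) ∂ν = ∫ x, (∫ y, F y x ∂(m x)) ∂ν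

/-- `Ω` is `m`-connected with respect to `ν`. -/
def mConnected {X : Type*} [MeasurableSpace X] (m : X → MeasureTheory.Measure X)
    (ν : MeasureTheory.Measure X) (Ω : Set X) : Prop :=
  ∀ A B : Set X, MeasurableSet A → MeasurableSet B → A ⊆ Ω → B ⊆ Ω → A ∪ B = Ω →
    ν A ≠ 0 → ν B ≠ 0 → 0 < ∫ x in A, (m x B).toReal ∂ν

/-- Membership in `L²₀(Ω_m, ν)`: square integrable on `Ω_m`, vanishing `ν`-a.e. on the
`m`-boundary, extended by `0` outside `Ω_m`. -/
def MemL20 {X : Type*} [MeasurableSpace X] (m : X → MeasureTheory.Measure X)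
    (ν : MeasureTheory.Measure X) (Ω : Set X) (u : X → ℝ) : Prop :=
  Measurable u ∧ MeasureTheory.MemLp u 2 (ν.restrict (mClosure m Ω)) ∧
    (∀ᵐ x ∂(ν.restrict (mBoundary m Ω)), u x = 0) ∧ ∀ x ∉ mClosure m Ω, u x = 0

/-- The nonlocal Dirichlet energy `(1/2)∬_{Ω_m×Ω_m} |u(y)-u(x)|² dm_x(y) dν(x)`. -/
noncomputable def gradEnergy {X : Type*} [MeasurableSpace X] (m : X → MeasureTheory.Measure X)
    (ν : MeasureTheory.Measure X) (Ω : Set X) (u : X → ℝ) : ℝ :=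
  (1 / 2) * ∫ x in mClosure m Ω, (∫ y in mClosure m Ω, (u y - u x) ^ 2 ∂(m x)) ∂ν

/-- The standing assumptions of the paper: reversible random walk space, `Ω` `m`-connected with
`0 < ν(Ω) < ν(Ω_m) < ∞`, a 2-Poincaré inequality with first eigenvalue `lam = λ_m(Ω)` attained
by an eigenfunction `φ` with `0 < α ≤ φ ≤ M` a.e. on `Ω` and `φ = 0` on `∂_mΩ`. -/
structure Standing {X : Type*} [MeasurableSpace X] (m : X → MeasureTheory.Measure X)
    (ν : MeasureTheory.Measure X) (Ω : Set X) (lam : ℝ) (φ : X → ℝ) (α M : ℝ) : Prop where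
  hrw : IsRandomWalk m
  hrev : Reversible m ν
  hsigma : MeasureTheory.SigmaFinite ν
  hmeasΩ : MeasurableSet Ω
  hconn : mConnected m ν Ω
  hpos : 0 < ν Ω
  hlt : ν Ω < ν (mClosure m Ω)
  hfin : ν (mClosure m Ω) < ⊤
  hlamPos : 0 < lam
  hpoincare : ∀ u : X → ℝ, MemL20 m ν Ω u →
    lam * ∫ x in Ω, u x ^ 2 ∂ν ≤ gradEnergy m ν Ω u
  hphiMem : MemL20 m ν Ω φ
  heig : ∀ᵐ x ∂(ν.restrict Ω), -(deltaM m φ x) = lam * φ x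
  halphaPos : 0 < α
  halphaM : α ≤ M
  hphiLB : ∀ᵐ x ∂(ν.restrict Ω), α ≤ φ x
  hphiUB : ∀ᵐ x ∂(ν.restrict Ω), φ x ≤ M

/-- Essential boundedness on a set `S` with respect to `ν`. -/
def IsBdd {X : Type*} [MeasurableSpace X] (ν : MeasureTheory.Measure X) (S : Set X)
    (u : X → ℝ) : Prop :=
  ∃ C : ℝ, ∀ᵐ x ∂(ν.restrict S), |u x| ≤ C

/-- A (nonnegative) solution of the Gelfand-type problem `(P(λ f))`. -/
def IsSol {X : Type*} [MeasurableSpace X] (m : X → MeasureTheory.Measure X)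
    (ν : MeasureTheory.Measure X) (Ω : Set X) (lam : ℝ) (f : ℝ → ℝ) (u : X → ℝ) : Prop :=
  MemL20 m ν Ω u ∧ (∀ᵐ x ∂(ν.restrict (mClosure m Ω)), 0 ≤ u x) ∧
    ∀ᵐ x ∂(ν.restrict Ω), -(deltaM m u x) = lam * f (u x)

/-- A solution of `(P(λ f))` without a sign constraint. -/
def IsSolNS {X : Type*} [MeasurableSpace X] (m : X → MeasureTheory.Measure X)
    (ν : MeasureTheory.Measure X) (Ω : Set X) (lam : ℝ) (f : ℝ → ℝ) (u : X → ℝ) : Prop :=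
  MemL20 m ν Ω u ∧ ∀ᵐ x ∂(ν.restrict Ω), -(deltaM m u x) = lam * f (u x)

/-- A minimal solution of `(P(λ f))`. -/
def IsMinimalSol {X : Type*} [MeasurableSpace X] (m : X → MeasureTheory.Measure X)
    (ν : MeasureTheory.Measure X) (Ω : Set X) (lam : ℝ) (f : ℝ → ℝ) (u : X → ℝ) : Prop :=
  IsSol m ν Ω lam f u ∧
    ∀ v : X → ℝ, IsSol m ν Ω lam f v → ∀ᵐ x ∂(ν.restrict (mClosure m Ω)), u x ≤ v x

/-- The extremal parameter `λ*`. -/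
noncomputable def lamStar {X : Type*} [MeasurableSpace X] (m : X → MeasureTheory.Measure X)
    (ν : MeasureTheory.Measure X) (Ω : Set X) (f : ℝ → ℝ) : ℝ :=
  sSup {lam : ℝ | 0 ≤ lam ∧ ∃ u : X → ℝ, IsSol m ν Ω lam f u ∧ IsBdd ν (mClosure m Ω) u}

/-- Hypotheses (H) on the nonlinearity `f` with constant `c₁`. -/
def HypH (f : ℝ → ℝ) (c₁ : ℝ) : Prop :=
  ContinuousOn f (Set.Ici 0) ∧ MonotoneOn f (Set.Ici 0) ∧ 0 < f 0 ∧ 0 < c₁ ∧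
    ∀ s : ℝ, 0 ≤ s → c₁ * s ≤ f s

/-- The stability quadratic form `Q_u(v)` with linearized potential `fp ∘ u` (where `fp = f'`). -/
noncomputable def Qform {X : Type*} [MeasurableSpace X] (m : X → MeasureTheory.Measure X)
    (ν : MeasureTheory.Measure X) (Ω : Set X) (lam : ℝ) (fp : ℝ → ℝ) (u v : X → ℝ) : ℝ :=
  gradEnergy m ν Ω v - lam * ∫ x in Ω, fp (u x) * v x ^ 2 ∂ν

/-- Stability of a solution: `Q_u(v) ≥ 0` for all test functions `v ∈ L^∞ ∩ L²₀`. -/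
def IsStable {X : Type*} [MeasurableSpace X] (m : X → MeasureTheory.Measure X)
    (ν : MeasureTheory.Measure X) (Ω : Set X) (lam : ℝ) (fp : ℝ → ℝ) (u : X → ℝ) : Prop :=
  ∀ v : X → ℝ, MemL20 m ν Ω v → IsBdd ν (mClosure m Ω) v → 0 ≤ Qform m ν Ω lam fp u v

/-- The first eigenvalue `μ₁(u)` of the linearized operator, as an infimum of `Q_u` over
normalized test functions. -/
noncomputable def mu1 {X : Type*} [MeasurableSpace X] (m : X → MeasureTheory.Measure X)
    (ν : MeasureTheory.Measure X) (Ω : Set X) (lam : ℝ) (fp : ℝ → ℝ) (u : X → ℝ) : ℝ :=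
  sInf {r : ℝ | ∃ v : X → ℝ, MemL20 m ν Ω v ∧ (∫ x in Ω, v x ^ 2 ∂ν) = 1 ∧
    r = Qform m ν Ω lam fp u v}

/-!
Pairing `-Δ_m w = t f(w)` with the eigenfunction `φ` and using the symmetry of `Δ_m` that comes
from reversibility gives `t ∫_Ω φ f(w) = λ_m(Ω) ∫_Ω w φ`. Since `s₀` maximizes `s / f(s)`, one
has `f(w) ≥ (f(s₀)/s₀) w`, and as `∫_Ω φ f(w) > 0` this forces `t ≤ λ_m(Ω) s₀ / f(s₀)`, the bound
on `λ*`. For `u ≤ s₀`, convexity gives `λ f'(u) ≤ λ f'(s₀) = λ f(s₀)/s₀ ≤ λ_m(Ω)`, so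
`Q_u(v) ≥ E(v) - λ_m(Ω) ∫_Ω v² ≥ 0` by the Poincaré inequality.

Reversibility is only available for bounded integrands, so the symmetry of `Δ_m` is first proved
for bounded representatives; reversibility also shows that the `m_x` do not charge `ν`-null sets,
so `Δ_m` does not depend on the representative.
-/

section RandomWalk

variable {X : Type*} [MeasurableSpace X] {m : X → Measure X} {ν : Measure X}

lemma measurableSet_mBoundary (hrw : IsRandomWalk m) {Ω : Set X} (hΩ : MeasurableSet Ω) :
    MeasurableSet (mBoundary m Ω) :=
  hΩ.compl.inter (hrw.2 Ω hΩ measurableSet_Ioi)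

lemma Reversible.ae_measure_eq_zero [SigmaFinite ν] (hrw : IsRandomWalk m) (hrev : Reversible m ν)
    {N : Set X} (hN : MeasurableSet N) (hνN : ν N = 0) : ∀ᵐ x ∂ν, m x N = 0 := by
  have := hrw.1
  refine ae_of_forall_measure_lt_top_ae_restrict _ fun s hs hνs => ?_
  have : IsFiniteMeasure (ν.restrict s) := isFiniteMeasure_restrict.2 hνs.ne
  let F : X → X → ℝ := fun x y => s.indicator 1 x * N.indicator 1 y
  have hF : Measurable (Function.uncurry F) :=
    ((measurable_const.indicator hs).comp measurable_fst).mul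
      ((measurable_const.indicator hN).comp measurable_snd)
  have hFbdd : ∃ C, ∀ x y, |F x y| ≤ C :=
    ⟨1, fun x y => by simp only [F, Set.indicator]; split_ifs <;> norm_num⟩
  have hL : ∫ x, ∫ y, F x y ∂(m x) ∂ν = ∫ x in s, (m x).real N ∂ν := by
    simp only [F, integral_const_mul, integral_indicator_one hN, ← integral_indicator hs]
    congr 1; ext x; by_cases hx : x ∈ s <;> simp [hx]
  have hR : ∫ x, ∫ y, F y x ∂(m x) ∂ν = 0 := by
    refine integral_eq_zero_of_ae ?_
    filter_upwards [measure_eq_zero_iff_ae_notMem.1 hνN] with x hx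
    simp [F, hx]
  have hsN : ∫ x in s, (m x).real N ∂ν = 0 := hL ▸ hR ▸ hrev F hF hFbdd
  have hint : Integrable (fun x => (m x).real N) (ν.restrict s) :=
    (integrable_const (1 : ℝ)).mono' (hrw.2 N hN).ennreal_toReal.aestronglyMeasurable
      (ae_of_all _ fun x => by
        rw [Real.norm_eq_abs, abs_of_nonneg measureReal_nonneg]; exact measureReal_le_one)
  filter_upwards [(integral_eq_zero_iff_of_nonneg (fun _ => measureReal_nonneg) hint).1 hsN]
    with x hx
  exact (measureReal_eq_zero_iff).1 hx

lemma Reversible.ae_ae_of_ae [SigmaFinite ν] (hrw : IsRandomWalk m) (hrev : Reversible m ν)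
    {p : X → Prop} (hp : ∀ᵐ y ∂ν, p y) : ∀ᵐ x ∂ν, ∀ᵐ y ∂(m x), p y := by
  have hnull : ν (toMeasurable ν {y | ¬p y}) = 0 := by rwa [measure_toMeasurable, ← ae_iff]
  filter_upwards [hrev.ae_measure_eq_zero hrw (measurableSet_toMeasurable _ _) hnull] with x hx
  exact measure_mono_null (subset_toMeasurable _ _) hx

lemma deltaM_ae_congr [SigmaFinite ν] (hrw : IsRandomWalk m) (hrev : Reversible m ν)
    {u v : X → ℝ} (huv : u =ᵐ[ν] v) : deltaM m u =ᵐ[ν] deltaM m v := by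
  filter_upwards [huv, hrev.ae_ae_of_ae hrw huv] with x hx hxy
  exact integral_congr_ae (by filter_upwards [hxy] with y hy; rw [hy, hx])

lemma measurable_integral_of_isRandomWalk (hrw : IsRandomWalk m) {u : X → ℝ}
    (hu : Measurable u) : Measurable fun x => ∫ y, u y ∂(m x) :=
  (hu.stronglyMeasurable.integral_kernel
    (κ := ⟨m, Measure.measurable_of_measurable_coe m hrw.2⟩)).measurable

lemma abs_integral_le_of_isRandomWalk (hrw : IsRandomWalk m) {u : X → ℝ} {C : ℝ}
    (hub : ∀ x, |u x| ≤ C) (x : X) : |∫ y, u y ∂(m x)| ≤ C := by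
  have := hrw.1
  simpa using norm_integral_le_of_norm_le_const (μ := m x) (f := u)
    (ae_of_all _ fun y => by simpa using hub y)

lemma deltaM_eq_integral_sub (hrw : IsRandomWalk m) {u : X → ℝ} {x : X}
    (hu : Integrable u (m x)) : deltaM m u x = ∫ y, u y ∂(m x) - u x := by
  have := hrw.1
  rw [deltaM, integral_sub hu (integrable_const _), integral_const, probReal_univ, one_smul]

lemma Reversible.integral_mul_integral_comm (hrev : Reversible m ν) {u φ : X → ℝ}
    (hu : Measurable u) (hφ : Measurable φ) {Cu Cφ : ℝ} (hub : ∀ x, |u x| ≤ Cu)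
    (hφb : ∀ x, |φ x| ≤ Cφ) :
    ∫ x, φ x * ∫ y, u y ∂(m x) ∂ν = ∫ x, u x * ∫ y, φ y ∂(m x) ∂ν := by
  have hF : Measurable (Function.uncurry fun x y => φ x * u y) :=
    (hφ.comp measurable_fst).mul (hu.comp measurable_snd)
  have hFbdd : ∃ C, ∀ x y, |φ x * u y| ≤ C := ⟨Cφ * Cu, fun x y => by
    rw [abs_mul]; exact mul_le_mul (hφb x) (hub y) (abs_nonneg _) ((abs_nonneg _).trans (hφb x))⟩
  simpa only [integral_const_mul, integral_mul_const, mul_comm] using hrev _ hF hFbdd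

lemma integral_mul_deltaM (hrw : IsRandomWalk m) {u φ : X → ℝ} (hu : Measurable u) {C : ℝ}
    (hub : ∀ x, |u x| ≤ C) (hφ : Integrable φ ν) :
    ∫ x, φ x * deltaM m u x ∂ν = ∫ x, φ x * ∫ y, u y ∂(m x) ∂ν - ∫ x, φ x * u x ∂ν := by
  have := hrw.1
  have hum : ∀ x, Integrable u (m x) := fun x =>
    (integrable_const C).mono' hu.aestronglyMeasurable (ae_of_all _ hub)
  rw [← integral_sub]
  · simp only [deltaM_eq_integral_sub hrw (hum _), mul_sub]
  · exact hφ.mul_bdd (measurable_integral_of_isRandomWalk hrw hu).aestronglyMeasurable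
      (ae_of_all _ (abs_integral_le_of_isRandomWalk hrw hub))
  · exact hφ.mul_bdd hu.aestronglyMeasurable (ae_of_all _ hub)

lemma integral_mul_deltaM_comm_of_forall_abs_le (hrw : IsRandomWalk m) (hrev : Reversible m ν)
    {u φ : X → ℝ} (hu : Measurable u) (hφ : Measurable φ) (hui : Integrable u ν)
    (hφi : Integrable φ ν) {Cu Cφ : ℝ} (hub : ∀ x, |u x| ≤ Cu) (hφb : ∀ x, |φ x| ≤ Cφ) :
    ∫ x, φ x * deltaM m u x ∂ν = ∫ x, u x * deltaM m φ x ∂ν := by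
  rw [integral_mul_deltaM hrw hu hub hφi, integral_mul_deltaM hrw hφ hφb hui,
    hrev.integral_mul_integral_comm hu hφ hub hφb]
  simp only [mul_comm (φ _)]

lemma exists_measurable_forall_abs_le_ae_eq {u : X → ℝ} (hu : Measurable u) {C : ℝ}
    (hub : ∀ᵐ x ∂ν, |u x| ≤ C) :
    ∃ u' : X → ℝ, Measurable u' ∧ (∀ x, |u' x| ≤ |C|) ∧ u' =ᵐ[ν] u := by
  refine ⟨fun x => max (-|C|) (min (u x) |C|), measurable_const.max (hu.min measurable_const),
    fun x => abs_le.2 ⟨le_max_left _ _, max_le (by simp) (min_le_right _ _)⟩, ?_⟩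
  filter_upwards [hub] with x hx
  have := abs_le.1 (hx.trans (le_abs_self C))
  simp only [min_eq_left this.2, max_eq_right this.1]

lemma integral_mul_deltaM_comm [SigmaFinite ν] (hrw : IsRandomWalk m) (hrev : Reversible m ν)
    {u φ : X → ℝ} (hu : Measurable u) (hφ : Measurable φ) (hui : Integrable u ν)
    (hφi : Integrable φ ν) {Cu Cφ : ℝ} (hub : ∀ᵐ x ∂ν, |u x| ≤ Cu)
    (hφb : ∀ᵐ x ∂ν, |φ x| ≤ Cφ) :
    ∫ x, φ x * deltaM m u x ∂ν = ∫ x, u x * deltaM m φ x ∂ν := by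
  obtain ⟨u', hu', hu'b, hu'u⟩ := exists_measurable_forall_abs_le_ae_eq hu hub
  obtain ⟨φ', hφ', hφ'b, hφ'φ⟩ := exists_measurable_forall_abs_le_ae_eq hφ hφb
  have key := integral_mul_deltaM_comm_of_forall_abs_le hrw hrev hu' hφ'
    (hui.congr hu'u.symm) (hφi.congr hφ'φ.symm) hu'b hφ'b
  refine Eq.trans ?_ (key.trans ?_) <;> refine integral_congr_ae ?_
  · filter_upwards [hφ'φ, deltaM_ae_congr hrw hrev hu'u] with x h1 h2
    rw [h1, h2]
  · filter_upwards [hu'u, deltaM_ae_congr hrw hrev hφ'φ] with x h1 h2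
    rw [h1, h2]

end RandomWalk

namespace MemL20

variable {X : Type*} [MeasurableSpace X] {m : X → Measure X} {ν : Measure X} {Ω : Set X}
  {u : X → ℝ}

lemma integrable (hfin : ν (mClosure m Ω) < ⊤) (hu : MemL20 m ν Ω u) : Integrable u ν := by
  have : IsFiniteMeasure (ν.restrict (mClosure m Ω)) := isFiniteMeasure_restrict.2 hfin.ne
  exact IntegrableOn.integrable_of_forall_notMem_eq_zero
    (hu.2.1.integrable one_le_two) hu.2.2.2

lemma ae_eq_zero_of_notMem (hrw : IsRandomWalk m) (hΩ : MeasurableSet Ω)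
    (hu : MemL20 m ν Ω u) : ∀ᵐ x ∂ν, x ∉ Ω → u x = 0 := by
  filter_upwards [(ae_restrict_iff' (measurableSet_mBoundary hrw hΩ)).1 hu.2.2.1] with x hx hxΩ
  by_cases hxB : x ∈ mBoundary m Ω
  · exact hx hxB
  · exact hu.2.2.2 x fun h => h.elim hxΩ hxB

lemma ae_abs_le (hrw : IsRandomWalk m) (hΩ : MeasurableSet Ω) (hu : MemL20 m ν Ω u) {C : ℝ}
    (hC : ∀ᵐ x ∂(ν.restrict Ω), |u x| ≤ C) : ∀ᵐ x ∂ν, |u x| ≤ max C 0 := by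
  filter_upwards [(ae_restrict_iff' hΩ).1 hC, hu.ae_eq_zero_of_notMem hrw hΩ] with x hxΩ hx
  by_cases h : x ∈ Ω
  · exact (hxΩ h).trans (le_max_left _ _)
  · simp [hx h]

lemma integral_mul_eq_setIntegral (hrw : IsRandomWalk m) (hΩ : MeasurableSet Ω)
    (hu : MemL20 m ν Ω u) (h : X → ℝ) : ∫ x, u x * h x ∂ν = ∫ x in Ω, u x * h x ∂ν := by
  rw [← integral_indicator hΩ]
  refine integral_congr_ae ?_
  filter_upwards [hu.ae_eq_zero_of_notMem hrw hΩ] with x hx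
  by_cases hxΩ : x ∈ Ω
  · simp [hxΩ]
  · simp [hxΩ, hx hxΩ]

end MemL20

lemma setIntegral_mul_deltaM_comm {X : Type*} [MeasurableSpace X] {m : X → Measure X}
    {ν : Measure X} [SigmaFinite ν] {Ω : Set X} (hrw : IsRandomWalk m) (hrev : Reversible m ν)
    (hΩ : MeasurableSet Ω) (hfin : ν (mClosure m Ω) < ⊤) {u φ : X → ℝ}
    (hu : MemL20 m ν Ω u) (hφ : MemL20 m ν Ω φ) {Cu Cφ : ℝ}
    (hub : ∀ᵐ x ∂(ν.restrict Ω), |u x| ≤ Cu) (hφb : ∀ᵐ x ∂(ν.restrict Ω), |φ x| ≤ Cφ) :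
    ∫ x in Ω, φ x * deltaM m u x ∂ν = ∫ x in Ω, u x * deltaM m φ x ∂ν := by
  rw [← hφ.integral_mul_eq_setIntegral hrw hΩ, ← hu.integral_mul_eq_setIntegral hrw hΩ]
  exact integral_mul_deltaM_comm hrw hrev hu.1 hφ.1 (hu.integrable hfin)
    (hφ.integrable hfin) (hu.ae_abs_le hrw hΩ hub) (hφ.ae_abs_le hrw hΩ hφb)

namespace Standing

variable {X : Type*} [MeasurableSpace X] {m : X → Measure X} {ν : Measure X} {Ω : Set X}
  {lam : ℝ} {φ : X → ℝ} {α M : ℝ}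

lemma ae_abs_le (hst : Standing m ν Ω lam φ α M) : ∀ᵐ x ∂(ν.restrict Ω), |φ x| ≤ M := by
  filter_upwards [hst.hphiLB, hst.hphiUB] with x hlb hub
  rwa [abs_of_pos (hst.halphaPos.trans_le hlb)]

lemma mul_setIntegral_mul_comp_eq (hst : Standing m ν Ω lam φ α M) {t : ℝ} {f : ℝ → ℝ}
    {w : X → ℝ} (hw : IsSolNS m ν Ω t f w) (hwb : IsBdd ν (mClosure m Ω) w) :
    t * ∫ x in Ω, φ x * f (w x) ∂ν = lam * ∫ x in Ω, w x * φ x ∂ν := by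
  have := hst.hsigma
  obtain ⟨C, hC⟩ := hwb
  have hgreen := setIntegral_mul_deltaM_comm hst.hrw hst.hrev hst.hmeasΩ hst.hfin hw.1
    hst.hphiMem (ae_restrict_of_ae_restrict_of_subset subset_union_left hC) hst.ae_abs_le
  have hL : ∫ x in Ω, φ x * deltaM m w x ∂ν = -(t * ∫ x in Ω, φ x * f (w x) ∂ν) := by
    rw [← integral_const_mul, ← integral_neg]
    refine integral_congr_ae ?_
    filter_upwards [hw.2] with x hx
    linear_combination (-φ x) * hx
  have hR : ∫ x in Ω, w x * deltaM m φ x ∂ν = -(lam * ∫ x in Ω, w x * φ x ∂ν) := by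
    rw [← integral_const_mul, ← integral_neg]
    refine integral_congr_ae ?_
    filter_upwards [hst.heig] with x hx
    linear_combination (-w x) * hx
  linarith

lemma measure_lt_top (hst : Standing m ν Ω lam φ α M) : ν Ω < ⊤ :=
  (measure_mono subset_union_left).trans_lt hst.hfin

lemma integrableOn_mul_comp (hst : Standing m ν Ω lam φ α M) {f : ℝ → ℝ}
    (hmono : MonotoneOn f (Ici 0)) {w : X → ℝ} (hw : Measurable w) {C : ℝ}
    (hwC : ∀ᵐ x ∂(ν.restrict Ω), 0 ≤ w x ∧ w x ≤ C) :
    IntegrableOn (fun x => φ x * f (w x)) Ω ν := by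
  have hf_mono : Monotone fun s => f (max s 0) := fun a b hab =>
    hmono (mem_Ici.2 (le_max_right _ _)) (mem_Ici.2 (le_max_right _ _)) (max_le_max hab le_rfl)
  have hfw : AEStronglyMeasurable (fun x => f (w x)) (ν.restrict Ω) := by
    refine (hf_mono.measurable.comp hw).aestronglyMeasurable.congr ?_
    filter_upwards [hwC] with x hx
    simp [max_eq_left hx.1]
  refine (hst.hphiMem.integrable hst.hfin).restrict.mul_bdd (c := max |f 0| |f C|) hfw ?_
  filter_upwards [hwC] with x hx
  exact abs_le_max_abs_abs (hmono self_mem_Ici hx.1 hx.1) (hmono hx.1 (hx.1.trans hx.2) hx.2)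

lemma setIntegral_mul_comp_pos (hst : Standing m ν Ω lam φ α M) {f : ℝ → ℝ}
    (hmono : MonotoneOn f (Ici 0)) (hf0 : 0 < f 0) {w : X → ℝ} (hw : Measurable w) {C : ℝ}
    (hwC : ∀ᵐ x ∂(ν.restrict Ω), 0 ≤ w x ∧ w x ≤ C) :
    0 < ∫ x in Ω, φ x * f (w x) ∂ν := by
  have : IsFiniteMeasure (ν.restrict Ω) := isFiniteMeasure_restrict.2 hst.measure_lt_top.ne
  have hνΩ : 0 < ν.real Ω := ENNReal.toReal_pos hst.hpos.ne' hst.measure_lt_top.ne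
  calc 0 < ν.real Ω * (α * f 0) := mul_pos hνΩ (mul_pos hst.halphaPos hf0)
    _ = ∫ _ in Ω, α * f 0 ∂ν := by rw [setIntegral_const, smul_eq_mul]
    _ ≤ ∫ x in Ω, φ x * f (w x) ∂ν := by
      refine integral_mono_ae (integrable_const _) (hst.integrableOn_mul_comp hmono hw hwC) ?_
      filter_upwards [hst.hphiLB, hwC] with x hα hx
      exact mul_le_mul hα (hmono self_mem_Ici hx.1 hx.1) hf0.le (hst.halphaPos.le.trans hα)

lemma le_of_isSol (hst : Standing m ν Ω lam φ α M) {f : ℝ → ℝ}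
    (hmono : MonotoneOn f (Ici 0)) (hf0 : 0 < f 0) {s₀ : ℝ} (hs₀pos : 0 < s₀)
    (hs₀max : ∀ s : ℝ, 0 ≤ s → s / f s ≤ s₀ / f s₀) {t : ℝ} (ht : 0 ≤ t) {w : X → ℝ}
    (hw : IsSol m ν Ω t f w) (hwb : IsBdd ν (mClosure m Ω) w) :
    t ≤ lam * (s₀ / f s₀) := by
  have hfs₀ : 0 < f s₀ := hf0.trans_le (hmono self_mem_Ici hs₀pos.le hs₀pos.le)
  rw [mul_div_assoc', le_div_iff₀ hfs₀]
  rcases ht.eq_or_lt with rfl | htpos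
  · simpa using mul_nonneg hst.hlamPos.le hs₀pos.le
  obtain ⟨C, hC⟩ := hwb
  have hwC : ∀ᵐ x ∂(ν.restrict Ω), 0 ≤ w x ∧ w x ≤ C := by
    filter_upwards [ae_restrict_of_ae_restrict_of_subset subset_union_left hw.2.1,
      ae_restrict_of_ae_restrict_of_subset subset_union_left hC] with x h0 hC
    exact ⟨h0, le_of_abs_le hC⟩
  set K := ∫ x in Ω, φ x * f (w x) ∂ν
  set J := ∫ x in Ω, w x * φ x ∂ν
  have hK : 0 < K := hst.setIntegral_mul_comp_pos hmono hf0 hw.1.1 hwC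
  have hKJ : t * K = lam * J := hst.mul_setIntegral_mul_comp_eq ⟨hw.1, hw.2.2⟩ ⟨C, hC⟩
  have hJ : 0 < J := pos_of_mul_pos_right (hKJ ▸ mul_pos htpos hK) hst.hlamPos.le
  have hJK : f s₀ * J ≤ s₀ * K := by
    rw [← integral_const_mul, ← integral_const_mul]
    refine integral_mono_of_nonneg ?_ ((hst.integrableOn_mul_comp hmono hw.1.1 hwC).const_mul _) ?_
    · filter_upwards [hst.hphiLB, hwC] with x hα hx
      exact mul_nonneg hfs₀.le (mul_nonneg hx.1 (hst.halphaPos.le.trans hα))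
    · filter_upwards [hst.hphiLB, hwC] with x hα hx
      have h := (div_le_div_iff₀ (hf0.trans_le (hmono self_mem_Ici hx.1 hx.1)) hfs₀).1
        (hs₀max _ hx.1)
      linarith [mul_le_mul_of_nonneg_right h (hst.halphaPos.le.trans hα)]
  refine le_of_mul_le_mul_right ?_ hJ
  nlinarith [mul_le_mul_of_nonneg_left hJK htpos.le]

lemma lamStar_le (hst : Standing m ν Ω lam φ α M) {f : ℝ → ℝ}
    (hmono : MonotoneOn f (Ici 0)) (hf0 : 0 < f 0) {s₀ : ℝ} (hs₀pos : 0 < s₀)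
    (hs₀max : ∀ s : ℝ, 0 ≤ s → s / f s ≤ s₀ / f s₀) :
    lamStar m ν Ω f ≤ lam * (s₀ / f s₀) := by
  have hfs₀ : 0 < f s₀ := hf0.trans_le (hmono self_mem_Ici hs₀pos.le hs₀pos.le)
  exact Real.sSup_le (fun t ⟨ht, w, hw, hwb⟩ => hst.le_of_isSol hmono hf0 hs₀pos hs₀max ht hw hwb)
    (mul_nonneg hst.hlamPos.le (div_nonneg hs₀pos.le hfs₀.le))

end Standing

lemma isStable_of_ae_mul_le {X : Type*} [MeasurableSpace X] {m : X → Measure X}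
    {ν : Measure X} {Ω : Set X} {lam : ℝ}
    (hpoincare : ∀ v : X → ℝ, MemL20 m ν Ω v → lam * ∫ x in Ω, v x ^ 2 ∂ν ≤ gradEnergy m ν Ω v)
    {l : ℝ} {fp : ℝ → ℝ} {u : X → ℝ}
    (hu : ∀ᵐ x ∂(ν.restrict Ω), 0 ≤ l * fp (u x) ∧ l * fp (u x) ≤ lam) :
    IsStable m ν Ω l fp u := by
  intro v hv _
  have hv2 : Integrable (fun x => v x ^ 2) (ν.restrict Ω) :=
    hv.2.1.integrable_sq.mono_measure (Measure.restrict_mono subset_union_left le_rfl)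
  rw [Qform, sub_nonneg]
  calc l * ∫ x in Ω, fp (u x) * v x ^ 2 ∂ν = ∫ x in Ω, l * fp (u x) * v x ^ 2 ∂ν := by
        simp only [mul_assoc, integral_const_mul]
    _ ≤ ∫ x in Ω, lam * v x ^ 2 ∂ν := by
        refine integral_mono_of_nonneg ?_ (hv2.const_mul lam) ?_ <;> filter_upwards [hu] with x hx
        · exact mul_nonneg hx.1 (sq_nonneg _)
        · exact mul_le_mul_of_nonneg_right hx.2 (sq_nonneg _)
    _ = lam * ∫ x in Ω, v x ^ 2 ∂ν := integral_const_mul _ _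
    _ ≤ gradEnergy m ν Ω v := hpoincare v hv

lemma mul_derivWithin_le {f : ℝ → ℝ} (hconv : ConvexOn ℝ (Ici 0) f)
    (hdiff : DifferentiableOn ℝ f (Ici 0)) (hmono : MonotoneOn f (Ici 0)) {s₀ : ℝ}
    (hfs₀ : f s₀ ≠ 0) (hs₀eq : f s₀ = s₀ * derivWithin f (Ici 0) s₀) {lam l s : ℝ}
    (hl : 0 ≤ l) (hlle : l ≤ lam * (s₀ / f s₀)) (hs : 0 ≤ s) (hss₀ : s ≤ s₀) :
    l * derivWithin f (Ici 0) s ≤ lam :=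
  calc l * derivWithin f (Ici 0) s ≤ l * derivWithin f (Ici 0) s₀ :=
        mul_le_mul_of_nonneg_left (hconv.monotoneOn_derivWithin hdiff hs (hs.trans hss₀) hss₀) hl
    _ ≤ lam * (s₀ / f s₀) * derivWithin f (Ici 0) s₀ :=
        mul_le_mul_of_nonneg_right hlle hmono.derivWithin_nonneg
    _ = lam := by field_simp; rw [mul_assoc, ← hs₀eq]

theorem stability_of_small_solutions_general
    {X : Type*} [MeasurableSpace X]
    (m : X → MeasureTheory.Measure X) (ν : MeasureTheory.Measure X)
    (Ω : Set X) (lam : ℝ) (φ : X → ℝ) (α M : ℝ)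
    (hst : Standing m ν Ω lam φ α M)
    (f : ℝ → ℝ) (hC1 : ContDiffOn ℝ 1 f (Set.Ici 0))
    (hconv : ConvexOn ℝ (Set.Ici 0) f)
    (hmono : MonotoneOn f (Set.Ici 0)) (hf0 : 0 < f 0)
    (s₀ : ℝ) (hs₀pos : 0 < s₀)
    (hs₀max : ∀ s : ℝ, 0 ≤ s → s / f s ≤ s₀ / f s₀)
    (hs₀eq : f s₀ = s₀ * derivWithin f (Set.Ici 0) s₀) :
    lamStar m ν Ω f ≤ lam * (s₀ / f s₀) ∧
      ∀ l : ℝ, 0 ≤ l → l ≤ lamStar m ν Ω f →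
        ∀ u : X → ℝ, IsSol m ν Ω l f u → IsBdd ν (mClosure m Ω) u →
          (∀ᵐ x ∂(ν.restrict Ω), u x ≤ s₀) →
          IsStable m ν Ω l (derivWithin f (Set.Ici 0)) u := by
  have hlamStar := hst.lamStar_le hmono hf0 hs₀pos hs₀max
  have hfs₀ : f s₀ ≠ 0 := (hf0.trans_le (hmono self_mem_Ici hs₀pos.le hs₀pos.le)).ne'
  refine ⟨hlamStar, fun l hl hll u hu _ hus₀ => isStable_of_ae_mul_le hst.hpoincare ?_⟩
  filter_upwards [ae_restrict_of_ae_restrict_of_subset subset_union_left hu.2.1, hus₀]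
    with x hx0 hxs₀
  exact ⟨mul_nonneg hl hmono.derivWithin_nonneg,
    mul_derivWithin_le hconv (hC1.differentiableOn one_ne_zero) hmono hfs₀ hs₀eq hl
      (hll.trans hlamStar) hx0 hxs₀⟩

/-- **Stability of small solutions**: for convex `f` with maximizer `s₀` of `s ↦ s/f(s)`, one
has `λ* ≤ λ_m(Ω)·s₀/f(s₀)`, and every bounded solution `u` of `(P(λ f))`, `0 ≤ λ ≤ λ*`, with
`u ≤ s₀` a.e. in `Ω` is stable. -/
theorem stability_of_small_solutions
    {X : Type*} [MeasurableSpace X] [MeasurableSpace.CountablyGenerated X]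
    (m : X → MeasureTheory.Measure X) (ν : MeasureTheory.Measure X)
    (Ω : Set X) (lam : ℝ) (φ : X → ℝ) (α M : ℝ)
    (hst : Standing m ν Ω lam φ α M)
    (f : ℝ → ℝ) (hC1 : ContDiffOn ℝ 1 f (Set.Ici 0))
    (hconv : ConvexOn ℝ (Set.Ici 0) f)
    (hmono : MonotoneOn f (Set.Ici 0)) (hf0 : 0 < f 0)
    (hsup : Filter.Tendsto (fun s => f s / s) Filter.atTop Filter.atTop)
    (s₀ : ℝ) (hs₀pos : 0 < s₀)
    (hs₀max : ∀ s : ℝ, 0 ≤ s → s / f s ≤ s₀ / f s₀)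
    (hs₀eq : f s₀ = s₀ * derivWithin f (Set.Ici 0) s₀) :
    lamStar m ν Ω f ≤ lam * (s₀ / f s₀) ∧
      ∀ l : ℝ, 0 ≤ l → l ≤ lamStar m ν Ω f →
        ∀ u : X → ℝ, IsSol m ν Ω l f u → IsBdd ν (mClosure m Ω) u →
          (∀ᵐ x ∂(ν.restrict Ω), u x ≤ s₀) →
          IsStable m ν Ω l (derivWithin f (Set.Ici 0)) u :=
  stability_of_small_solutions_general m ν Ω lam φ α M hst f hC1 hconv hmono hf0 s₀ hs₀pos hs₀max
    hs₀eq
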